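/- arXiv:1003.1484 — 3 statements merged into one kernel-verified Lean document; each statement's English description precedes it below -/
import Mathlib

section
/- In a locally elliptic locally compact group (every finite subset generates a relatively compact subgroup), every compact subset is contained in a compact open subgroup; consequently a non-compact locally elliptic locally compact group is not compactly generated. -/
/-!
Enlarge the compact set to a compact symmetric neighbourhood `V` of `1`. Finitely many translates
`x • V`, `x ∈ t`, cover `V * V`, so `V * V ⊆ H * V` with `H` the closed subgroup generated by
`t`, which is compact by local ellipticity. Then `H * V` absorbs right multiplication by `V`, so
it contains the subgroup generated by `V`; that subgroup is open, hence closed, and is therefore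
compact. A compactly generating set lies in such a subgroup, which must then be everything.
-/

open scoped Pointwise

def IsLocallyElliptic (G : Type*) [Group G] [TopologicalSpace G] [IsTopologicalGroup G] : Prop :=
  ∀ S : Set G, S.Finite → IsCompact ((Subgroup.closure S).topologicalClosure : Set G)

theorem Subgroup.closure_subset_mul_of_mul_self_subset {G : Type*} [Group G] {H : Subgroup G}
    {V : Set G} (h1 : (1 : G) ∈ V) (hinv : V⁻¹ ⊆ V) (hVV : V * V ⊆ (H : Set G) * V) :
    (closure V : Set G) ⊆ (H : Set G) * V := by
  have hHVV : (H : Set G) * V * V ⊆ (H : Set G) * V :=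
    calc (H : Set G) * V * V = H * (V * V) := mul_assoc _ _ _
      _ ⊆ H * (H * V) := Set.mul_subset_mul_left hVV
      _ = H * V := by rw [← mul_assoc, coe_mul_coe]
  intro g hg
  induction hg using closure_induction_right with
  | one => exact ⟨1, H.one_mem, 1, h1, one_mul 1⟩
  | mul_right _ _ y hy ih => exact hHVV (Set.mul_mem_mul ih hy)
  | mul_inv_cancel _ _ y hy ih => exact hHVV (Set.mul_mem_mul ih (hinv (Set.inv_mem_inv.2 hy)))

section TopologicalGroup

variable {G : Type*} [Group G] [TopologicalSpace G] [IsTopologicalGroup G]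

theorem IsCompact.exists_finite_subset_mul_of_one_mem_interior {K V : Set G} (hK : IsCompact K)
    (hV : (1 : G) ∈ interior V) : ∃ t : Set G, t.Finite ∧ K ⊆ t * V := by
  obtain ⟨t, ht⟩ := hK.elim_finite_subcover (fun x : G => x • interior V)
    (fun x => isOpen_interior.smul x)
    (fun y _ => Set.mem_iUnion.2 ⟨y, 1, hV, mul_one y⟩)
  refine ⟨t, t.finite_toSet, ht.trans ?_⟩
  rw [← smul_eq_mul, ← Set.iUnion_smul_set]
  exact Set.iUnion₂_mono fun x _ => Set.smul_set_mono interior_subset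

theorem Subgroup.eq_top_of_isOpen_of_subset {K : Subgroup G} (hK : IsOpen (K : Set G)) {S : Set G}
    (hSK : S ⊆ K) (hS : (closure S).topologicalClosure = ⊤) : K = ⊤ :=
  top_le_iff.1 <| hS ▸
    topologicalClosure_minimal _ ((closure_le K).2 hSK) (K.isClosed_of_isOpen hK)

theorem IsLocallyElliptic.exists_isCompact_isOpen_subgroup_superset [LocallyCompactSpace G]
    (hG : IsLocallyElliptic G) {S : Set G} (hS : IsCompact S) :
    ∃ K : Subgroup G, IsCompact (K : Set G) ∧ IsOpen (K : Set G) ∧ S ⊆ K := by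
  obtain ⟨W, hWc, hW⟩ := exists_compact_mem_nhds (1 : G)
  set V := (W ∪ S) ∪ (W ∪ S)⁻¹
  have hVc : IsCompact V := (hWc.union hS).union (hWc.union hS).inv
  have hV : V ∈ nhds (1 : G) := Filter.mem_of_superset hW fun x hx => .inl (.inl hx)
  have hinv : V⁻¹ ⊆ V := by simp only [V, Set.union_inv, inv_inv, Set.union_comm, subset_rfl]
  obtain ⟨t, ht, hVV⟩ := (hVc.mul hVc).exists_finite_subset_mul_of_one_mem_interior
    (mem_interior_iff_mem_nhds.2 hV)
  set H := (Subgroup.closure t).topologicalClosure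
  have htH : t ⊆ H := Subgroup.subset_closure.trans (Subgroup.le_topologicalClosure _)
  have hsub : (Subgroup.closure V : Set G) ⊆ (H : Set G) * V :=
    Subgroup.closure_subset_mul_of_mul_self_subset (mem_of_mem_nhds hV) hinv
      (hVV.trans (Set.mul_subset_mul_right htH))
  have hopen : IsOpen (Subgroup.closure V : Set G) :=
    Subgroup.isOpen_of_mem_nhds _ (Filter.mem_of_superset hV Subgroup.subset_closure)
  refine ⟨Subgroup.closure V, ?_, hopen, fun x hx => Subgroup.subset_closure (.inl (.inr hx))⟩
  exact ((hG t ht).mul hVc).of_isClosed_subset (Subgroup.isClosed_of_isOpen _ hopen) hsub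

end TopologicalGroup

/-- In a locally elliptic locally compact group (every finite subset
topologically generates a compact subgroup), every compact subset is contained in a compact
open subgroup; consequently, if the group is compactly generated then it is compact (so a
non-compact locally elliptic locally compact group is not compactly generated). -/
theorem stmt_15 {N : Type*} [Group N] [TopologicalSpace N] [IsTopologicalGroup N]
    [LocallyCompactSpace N]
    (hle : ∀ S : Set N, S.Finite →
      IsCompact (((Subgroup.closure S).topologicalClosure : Subgroup N) : Set N)) :
    (∀ S : Set N, IsCompact S → ∃ K : Subgroup N,
        IsCompact (K : Set N) ∧ IsOpen (K : Set N) ∧ S ⊆ K) ∧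
      ((∃ S : Set N, IsCompact S ∧ (Subgroup.closure S).topologicalClosure = ⊤) →
        CompactSpace N) := by
  have hK (S : Set N) (hS : IsCompact S) :=
    IsLocallyElliptic.exists_isCompact_isOpen_subgroup_superset (G := N) hle hS
  refine ⟨hK, ?_⟩
  rintro ⟨S, hS, hgen⟩
  obtain ⟨K, hKc, hKo, hSK⟩ := hK S hS
  rw [Subgroup.eq_top_of_isOpen_of_subset hKo hSK hgen, Subgroup.coe_top] at hKc
  exact isCompact_univ_iff.1 hKc
end

section
/- Let H be an open subgroup of a locally compact group G. Every continuous positive definite function φ on H extends to a continuous positive definite function on G, by setting it equal to 0 outside H. -/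
open scoped ComplexOrder Classical

/-- A function `φ : G → ℂ` on a group is positive definite if all the Gram-type sums
`∑ i j, c i * conj (c j) * φ ((g j)⁻¹ * g i)` are non-negative. -/
def IsPosDefFn {G : Type*} [Group G] (φ : G → ℂ) : Prop :=
  ∀ (n : ℕ) (g : Fin n → G) (c : Fin n → ℂ),
    0 ≤ ∑ i, ∑ j, c i * (starRingEnd ℂ) (c j) * φ ((g j)⁻¹ * g i)

/-!
A Gram sum of the extension by zero only couples points lying in the same left coset of `H`.
Moving each coset back into `H` by a fixed representative turns the block of that coset into a
Gram sum of `φ`, so the whole sum is a finite sum of non-negative terms. Continuity holds because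
an open subgroup is also closed, so near each point the extension is either `φ` or `0`.
-/

theorem IsClopen.continuous_dite_zero {X β : Type*} [TopologicalSpace X] [TopologicalSpace β]
    [Zero β] {s : Set X} (hs : IsClopen s) {f : s → β} (hf : Continuous f) :
    Continuous fun x => if h : x ∈ s then f ⟨x, h⟩ else 0 := by
  refine continuous_iff_continuousAt.2 fun x => ?_
  by_cases hx : x ∈ s
  · have hon : ContinuousOn (fun x => if h : x ∈ s then f ⟨x, h⟩ else 0) s := by
      rw [continuousOn_iff_continuous_domRestrict]
      convert hf using 1
      funext y
      exact dif_pos y.2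
    exact hon.continuousAt (hs.isOpen.mem_nhds hx)
  · refine (continuousAt_const (y := 0)).congr ?_
    filter_upwards [hs.compl.isOpen.mem_nhds hx] with y hy
    rw [dif_neg (show y ∉ s from hy)]

namespace QuotientGroup

variable {G : Type*} [Group G] (H : Subgroup G)

noncomputable def cosetOffset (g : G) : H :=
  ⟨(g : G ⧸ H).out⁻¹ * g, QuotientGroup.eq.mp (out_eq' _)⟩

variable {H}

theorem cosetOffset_inv_mul {a b : G} (h : (a : G ⧸ H) = b) :
    (((cosetOffset H b)⁻¹ * cosetOffset H a : H) : G) = b⁻¹ * a := by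
  simp [cosetOffset, h]

theorem dite_inv_mul_mem_eq {β : Type*} [Zero β] (f : H → β) (a b : G) :
    (if h : b⁻¹ * a ∈ H then f ⟨_, h⟩ else 0) =
      if (b : G ⧸ H) = a then f ((cosetOffset H b)⁻¹ * cosetOffset H a) else 0 := by
  by_cases hab : (b : G ⧸ H) = a
  · rw [dif_pos (QuotientGroup.eq.mp hab), if_pos hab]
    exact congrArg f (Subtype.ext (cosetOffset_inv_mul hab.symm).symm)
  · rw [dif_neg (mt QuotientGroup.eq.mpr hab), if_neg hab]

end QuotientGroup

open QuotientGroup in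
theorem IsPosDefFn.dite_subgroup {G : Type*} [Group G] {H : Subgroup G} {φ : H → ℂ}
    (hφ : IsPosDefFn φ) : IsPosDefFn fun g : G => if h : g ∈ H then φ ⟨g, h⟩ else 0 := by
  intro n g c
  set T : Finset (G ⧸ H) := Finset.univ.image fun i => (g i : G ⧸ H)
  let d : Fin n → H := cosetOffset H ∘ g
  let cOn (x : G ⧸ H) (i : Fin n) : ℂ := if (g i : G ⧸ H) = x then c i else 0
  have hsplit : ∀ i j, c i * (starRingEnd ℂ) (c j) *
      (if h : (g j)⁻¹ * g i ∈ H then φ ⟨_, h⟩ else 0) =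
      ∑ x ∈ T, cOn x i * (starRingEnd ℂ) (cOn x j) * φ ((d j)⁻¹ * d i) := by
    intro i j
    rw [dite_inv_mul_mem_eq, Finset.sum_eq_single_of_mem (g i : G ⧸ H) (by simp [T])]
    · by_cases hij : (g j : G ⧸ H) = g i <;> simp [cOn, d, hij]
    · intro x _ hx
      simp [cOn, Ne.symm hx]
  calc (0 : ℂ)
        ≤ ∑ x ∈ T, ∑ i, ∑ j, cOn x i * (starRingEnd ℂ) (cOn x j) * φ ((d j)⁻¹ * d i) :=
        Finset.sum_nonneg fun x _ => hφ n d (cOn x)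
    _ = _ := by
      simp only [hsplit, Finset.sum_comm (s := T)]

/-- Let `H` be an open subgroup of a topological group `G`. Every continuous
positive definite function `φ` on `H` extends to a continuous positive definite function on
`G` by setting it equal to `0` outside `H`. -/
theorem stmt_16 {G : Type*} [Group G] [TopologicalSpace G] [IsTopologicalGroup G]
    (H : Subgroup G) (hH : IsOpen (H : Set G)) (φ : ↥H → ℂ)
    (hφc : Continuous φ) (hφ : IsPosDefFn φ) :
    IsPosDefFn (fun g : G => if h : g ∈ H then φ ⟨g, h⟩ else 0) ∧
      Continuous (fun g : G => if h : g ∈ H then φ ⟨g, h⟩ else 0) :=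
  ⟨hφ.dite_subgroup, IsClopen.continuous_dite_zero ⟨H.isClosed_of_isOpen hH, hH⟩ hφc⟩
end

section
/- Let G be a locally compact group, N a closed normal subgroup, χ a continuous unitary character of N, and π_χ = Ind_N^G χ the induced representation. Then π_χ has a non-zero N-invariant vector if and only if χ is the trivial character. -/
/-!
If `f` is `N`-invariant and `f g ≠ 0`, then writing `g * n = (g * n * g⁻¹) * g` with
`g * n * g⁻¹ ∈ N` gives `f g = f (g * n) = χ(n)⁻¹ * f g`, so `χ n = 1`. Conversely, for trivial
`χ` every function pulled back from `G ⧸ N` is `N`-equivariant and, `N` being normal, also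
`N`-invariant; the indicator of a compact neighbourhood in the locally compact Hausdorff space
`G ⧸ N` is square-integrable for the Haar measure.
-/

open MeasureTheory

theorem Subgroup.eq_one_of_invariant_of_equivariant {G M₀ : Type*} [Group G] [GroupWithZero M₀]
    {N : Subgroup G} [N.Normal] (ψ : N →* M₀) {f : G → M₀}
    (hf : ∀ (g : G) (n : N), f (g * n) = (ψ n)⁻¹ * f g)
    (hinv : ∀ (n : N) (g : G), f ((n : G)⁻¹ * g) = f g) (hf0 : f ≠ 0) : ψ = 1 := by
  obtain ⟨g, hg⟩ := Function.ne_iff.mp hf0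
  ext n
  have hconj : f (g * n) = f g := by
    simpa using hinv ⟨g * n * g⁻¹, ‹N.Normal›.conj_mem _ n.2 g⟩⁻¹ g
  rwa [hf, mul_eq_right₀ hg, inv_eq_one] at hconj

theorem exists_measurable_ne_zero_integrable_norm_sq {X : Type*} [TopologicalSpace X]
    [LocallyCompactSpace X] [T2Space X] [MeasurableSpace X] [OpensMeasurableSpace X]
    (μ : Measure X) [IsFiniteMeasureOnCompacts μ] (x : X) :
    ∃ F : X → ℂ, Measurable F ∧ F x ≠ 0 ∧ Integrable (fun y => ‖F y‖ ^ 2) μ := by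
  obtain ⟨K, hKc, hxK⟩ := exists_compact_mem_nhds x
  have hnorm : (fun y => ‖K.indicator (1 : X → ℂ) y‖ ^ 2) = K.indicator 1 := by
    ext y
    by_cases hy : y ∈ K <;> simp [hy]
  refine ⟨K.indicator 1, measurable_one.indicator hKc.measurableSet, by
    simp [mem_of_mem_nhds hxK], ?_⟩
  rw [hnorm, integrable_indicator_iff hKc.measurableSet]
  exact integrableOn_const hKc.measure_lt_top.ne

theorem stmt_18_general {G : Type*} [Group G] [TopologicalSpace G] [IsTopologicalGroup G]
    [LocallyCompactSpace G] [MeasurableSpace G] [BorelSpace G]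
    (N : Subgroup G) [N.Normal] (hNcl : IsClosed (N : Set G))
    [MeasurableSpace (G ⧸ N)] [BorelSpace (G ⧸ N)]
    (μ : MeasureTheory.Measure (G ⧸ N)) [μ.IsHaarMeasure]
    (χ : ↥N →* Circle) :
    (∃ f : G → ℂ, Measurable f ∧ f ≠ 0 ∧
        (∀ (g : G) (n : ↥N), f (g * n) = ((χ n : ℂ))⁻¹ * f g) ∧
        (∃ F : G ⧸ N → ℝ, (∀ g : G, F (QuotientGroup.mk g) = ‖f g‖ ^ 2) ∧
          MeasureTheory.Integrable F μ) ∧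
        (∀ (n : ↥N) (g : G), f ((n : G)⁻¹ * g) = f g)) ↔
      χ = 1 := by
  constructor
  · rintro ⟨f, -, hf0, hf, -, hinv⟩
    have h := Subgroup.eq_one_of_invariant_of_equivariant (Circle.coeHom.comp χ) hf hinv hf0
    exact MonoidHom.ext fun n => Circle.coe_eq_one.mp (DFunLike.congr_fun h n)
  · rintro rfl
    -- the instance form of `hNcl` makes `G ⧸ N` Hausdorff
    have : IsClosed (N : Set G) := hNcl
    obtain ⟨F, hFm, hF1, hFint⟩ := exists_measurable_ne_zero_integrable_norm_sq μ (1 : G ⧸ N)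
    refine ⟨fun g => F g, hFm.comp QuotientGroup.continuous_mk.measurable,
      fun h => hF1 (congr_fun h 1), fun g n => ?_, ⟨_, fun g => rfl, hFint⟩, fun n g => ?_⟩
    · simp [QuotientGroup.mk_mul_of_mem g n.2]
    · simp [(QuotientGroup.eq_one_iff _).mpr n.2]

/-- Let `G` be a locally compact second countable group, `N` a closed normal
subgroup, `χ` a continuous unitary character of `N`, and `π_χ = Ind_N^G χ` the induced
representation, acting by left translation on the measurable functions `f : G → ℂ` with
`f (g n) = χ(n)⁻¹ f g` which are square-integrable modulo `N`. Then `π_χ` has a non-zero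
`N`-invariant vector if and only if `χ` is the trivial character. -/
theorem stmt_18 {G : Type*} [Group G] [TopologicalSpace G] [IsTopologicalGroup G]
    [LocallyCompactSpace G] [SecondCountableTopology G] [MeasurableSpace G] [BorelSpace G]
    (N : Subgroup G) [N.Normal] (hNcl : IsClosed (N : Set G))
    [MeasurableSpace (G ⧸ N)] [BorelSpace (G ⧸ N)]
    (μ : MeasureTheory.Measure (G ⧸ N)) [μ.IsHaarMeasure]
    (χ : ↥N →* Circle) (hχ : Continuous χ) :
    (∃ f : G → ℂ, Measurable f ∧ f ≠ 0 ∧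
        (∀ (g : G) (n : ↥N), f (g * n) = ((χ n : ℂ))⁻¹ * f g) ∧
        (∃ F : G ⧸ N → ℝ, (∀ g : G, F (QuotientGroup.mk g) = ‖f g‖ ^ 2) ∧
          MeasureTheory.Integrable F μ) ∧
        (∀ (n : ↥N) (g : G), f ((n : G)⁻¹ * g) = f g)) ↔
      χ = 1 :=
  stmt_18_general N hNcl μ χ
end
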